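/- Let I=⟨A,∅,R,R?⟩ be an AtIAF, S⊆A a set of arguments such that S is not stable-co with respect to I, and r=(a,b)∈R? an attack with a∉S and b∉S. Then: (i) r∈RE⁺(I,S,(co,true)) if and only if (b,b)∉R and OutRel(I,S,r)=true; and (ii) r∉RE⁻(I,S,(co,true)). -/
import Mathlib


universe u

/-- An abstract argumentation framework: a set of arguments with an attack relation. -/
structure AF (α : Type u) where
  args : Set α
  att : Set (α × α)

namespace AF

variable {α : Type u}

/-- `S⁺_F`: arguments attacked by `S`. -/
def plusSet (F : AF α) (S : Set α) : Set α := {a | a ∈ F.args ∧ ∃ b ∈ S, (b, a) ∈ F.att}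

/-- `S⁻_F`: arguments attacking `S`. -/
def minusSet (F : AF α) (S : Set α) : Set α := {a | a ∈ F.args ∧ ∃ b ∈ S, (a, b) ∈ F.att}

/-- `S` is conflict-free in `F`. -/
def confFree (F : AF α) (S : Set α) : Prop := S ∩ F.plusSet S = ∅

/-- `S` defends `a` in `F`: every attacker of `a` is attacked by `S`. -/
def defends (F : AF α) (S : Set α) (a : α) : Prop := ∀ b, (b, a) ∈ F.att → b ∈ F.plusSet S

/-- The characteristic function `Γ_F(S)`: arguments defended by `S`. -/
def Γ (F : AF α) (S : Set α) : Set α := {a | a ∈ F.args ∧ F.defends S a}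

/-- Admissible: conflict-free and self-defending. -/
def isAd (F : AF α) (S : Set α) : Prop := S ⊆ F.args ∧ F.confFree S ∧ S ⊆ F.Γ S

/-- Stable: conflict-free and attacking exactly the outside. -/
def isSt (F : AF α) (S : Set α) : Prop := S ⊆ F.args ∧ F.confFree S ∧ F.plusSet S = F.args \ S

/-- Complete: admissible and containing all defended arguments. -/
def isCo (F : AF α) (S : Set α) : Prop := F.isAd S ∧ F.Γ S ⊆ S

/-- Grounded: ⊆-minimal complete. -/
def isGr (F : AF α) (S : Set α) : Prop := F.isCo S ∧ ∀ T, F.isCo T → T ⊆ S → T = S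

/-- Preferred: ⊆-maximal admissible. -/
def isPr (F : AF α) (S : Set α) : Prop := F.isAd S ∧ ∀ T, F.isAd T → S ⊆ T → S = T

end AF

/-- The five common semantics. -/
inductive Sem : Type
  | ad | st | co | gr | pr
deriving DecidableEq

/-- `S` is a `σ`-extension of `F`. -/
def extOf {α : Type u} : Sem → AF α → Set α → Prop
  | .ad => AF.isAd
  | .st => AF.isSt
  | .co => AF.isCo
  | .gr => AF.isGr
  | .pr => AF.isPr

/-- An incomplete argumentation framework (data part). -/
structure IAF (α : Type u) where
  A : Set α
  Aq : Set α
  R : Set (α × α)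
  Rq : Set (α × α)

namespace IAF

variable {α : Type u}

/-- Well-formedness: `A`,`A?` disjoint; `R`,`R?` disjoint subsets of `(A∪A?)×(A∪A?)`. -/
def WF (I : IAF α) : Prop :=
  Disjoint I.A I.Aq ∧ Disjoint I.R I.Rq ∧
  I.R ⊆ (I.A ∪ I.Aq) ×ˢ (I.A ∪ I.Aq) ∧
  I.Rq ⊆ (I.A ∪ I.Aq) ×ˢ (I.A ∪ I.Aq)

/-- `cert(I)`: the AF projected on the certain part. -/
def cert (I : IAF α) : AF α := ⟨I.A, I.R ∩ I.A ×ˢ I.A⟩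

/-- `I'` is a partial completion of `I`. -/
def PartOf (I' I : IAF α) : Prop :=
  I'.WF ∧ I.A ⊆ I'.A ∧ I'.A ⊆ I.A ∪ I.Aq ∧
  I.R ∩ (I'.A ∪ I'.Aq) ×ˢ (I'.A ∪ I'.Aq) ⊆ I'.R ∧
  I'.R ⊆ I.R ∪ I.Rq ∧ I'.Aq ⊆ I.Aq ∧ I'.Rq ⊆ I.Rq

/-- `F` is a completion of `I`. -/
def IsCompletion (I : IAF α) (F : AF α) : Prop := ∃ I' : IAF α, I'.PartOf I ∧ F = I'.cert

/-- `I + R₀` for a set of uncertain attacks. -/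
def addR (I : IAF α) (R0 : Set (α × α)) : IAF α := ⟨I.A, I.Aq, I.R ∪ R0, I.Rq \ R0⟩

/-- `I − R₀` for a set of uncertain attacks. -/
def subR (I : IAF α) (R0 : Set (α × α)) : IAF α := ⟨I.A, I.Aq, I.R, I.Rq \ R0⟩

/-- `I + A₀` for a set of uncertain arguments. -/
def addA (I : IAF α) (A0 : Set α) : IAF α := ⟨I.A ∪ A0, I.Aq \ A0, I.R, I.Rq⟩

/-- `I − A₀` for a set of uncertain arguments. -/
def subA (I : IAF α) (A0 : Set α) : IAF α :=
  ⟨I.A, I.Aq \ A0,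
   I.R \ {p | p ∈ I.R ∪ I.Rq ∧ (p.1 ∈ A0 ∨ p.2 ∈ A0)},
   I.Rq \ {p | p ∈ I.R ∪ I.Rq ∧ (p.1 ∈ A0 ∨ p.2 ∈ A0)}⟩

/-- `S⁺_I`. -/
def plusI (I : IAF α) (S : Set α) : Set α := {a | a ∈ I.A ∪ I.Aq ∧ ∃ b ∈ S, (b, a) ∈ I.R}

/-- `S⁻_I`. -/
def minusI (I : IAF α) (S : Set α) : Set α := {a | a ∈ I.A ∪ I.Aq ∧ ∃ b ∈ S, (a, b) ∈ I.R}

/-- `S^∼_I`. -/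
def simI (I : IAF α) (S : Set α) : Set α :=
  {a | a ∈ I.A ∪ I.Aq ∧ ∀ b ∈ S, (b, a) ∉ I.R ∪ I.Rq}

end IAF

/-- An element of an IAF: either an argument or an attack. -/
inductive Elem (α : Type u) : Type u
  | arg (a : α)
  | att (r : α × α)

/-- `e` is an uncertain element of `I`, i.e. `e ∈ A? ∪ R?`. -/
def IAF.isUnc {α : Type u} (I : IAF α) : Elem α → Prop
  | .arg a => a ∈ I.Aq
  | .att r => r ∈ I.Rq

/-- `I + {e}`. -/
def IAF.addE {α : Type u} (I : IAF α) : Elem α → IAF α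
  | .arg a => I.addA {a}
  | .att r => I.addR {r}

/-- `I − {e}`. -/
def IAF.subE {α : Type u} (I : IAF α) : Elem α → IAF α
  | .arg a => I.subA {a}
  | .att r => I.subR {r}

/-- `e` is the unique uncertain element of `I`, i.e. `A? ∪ R? = {e}`. -/
def onlyUnc {α : Type u} (I : IAF α) : Elem α → Prop
  | .arg a => I.Aq = {a} ∧ I.Rq = ∅
  | .att r => I.Aq = ∅ ∧ I.Rq = {r}

/-- A verification status: a semantics together with true/false. -/
abbrev VStatus := Sem × Bool

/-- `S` has verification status `j` in the AF `F`. -/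
def hasStatus {α : Type u} (F : AF α) (S : Set α) (j : VStatus) : Prop :=
  cond j.2 (extOf j.1 F S) (¬ extOf j.1 F S)

/-- `S` is stable-`j` w.r.t. `I`. -/
def IAF.stableJ {α : Type u} (I : IAF α) (S : Set α) (j : VStatus) : Prop :=
  ∀ F, I.IsCompletion F → hasStatus F S j

/-- `S` is stable-`σ` w.r.t. `I`. -/
def IAF.stableSem {α : Type u} (I : IAF α) (S : Set α) (σ : Sem) : Prop :=
  I.stableJ S (σ, true) ∨ I.stableJ S (σ, false)

/-- `RE⁺(I,S,j)`: uncertain elements whose addition is `j`-relevant for `S` w.r.t. `I`. -/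
def REplus {α : Type u} (I : IAF α) (S : Set α) (j : VStatus) : Set (Elem α) :=
  {e | I.isUnc e ∧ ∃ I' : IAF α, I'.PartOf I ∧ onlyUnc I' e ∧
    hasStatus (I'.addE e).cert S j ∧ ¬ hasStatus (I'.subE e).cert S j}

/-- `RE⁻(I,S,j)`: uncertain elements whose removal is `j`-relevant for `S` w.r.t. `I`. -/
def REminus {α : Type u} (I : IAF α) (S : Set α) (j : VStatus) : Set (Elem α) :=
  {e | I.isUnc e ∧ ∃ I' : IAF α, I'.PartOf I ∧ onlyUnc I' e ∧
    hasStatus (I'.subE e).cert S j ∧ ¬ hasStatus (I'.addE e).cert S j}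

/-- `e` is `σ`-irrelevant for `S` w.r.t. `I`. -/
def irrelevant {α : Type u} (I : IAF α) (S : Set α) (σ : Sem) (e : Elem α) : Prop :=
  e ∉ REplus I S (σ, true) ∧ e ∉ REminus I S (σ, true) ∧
  e ∉ REplus I S (σ, false) ∧ e ∉ REminus I S (σ, false)

/-- `PosVer_σ(I,S) = true`. -/
def PosVer {α : Type u} (σ : Sem) (I : IAF α) (S : Set α) : Prop :=
  ∃ F, I.IsCompletion F ∧ extOf σ F S

/-- `NecVer_σ(I,S) = true`. -/
def NecVer {α : Type u} (σ : Sem) (I : IAF α) (S : Set α) : Prop :=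
  ∀ F, I.IsCompletion F → extOf σ F S

/-- `SRE⁺(I,S,j)`: uncertain elements whose addition is strongly `j`-relevant. -/
def SREplus {α : Type u} (I : IAF α) (S : Set α) (j : VStatus) : Set (Elem α) :=
  {e | I.isUnc e ∧ ∀ I' : IAF α, I'.PartOf (I.subE e) → ¬ I'.stableJ S j}

/-- `SRE⁻(I,S,j)`: uncertain elements whose removal is strongly `j`-relevant. -/
def SREminus {α : Type u} (I : IAF α) (S : Set α) (j : VStatus) : Set (Elem α) :=
  {e | I.isUnc e ∧ ∀ I' : IAF α, I'.PartOf (I.addE e) → ¬ I'.stableJ S j}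

/-- The `OutRel(I,S,(a,b))` predicate. -/
def OutRel {α : Type u} (I : IAF α) (S : Set α) (r : α × α) : Prop :=
  (I.minusI {r.2} \ {r.1}) ∩ I.simI S = ∅ ∧
  PosVer Sem.co
    ((I.addR {p | p ∈ I.Rq ∧ p.1 ∈ S ∧ p.2 ∈ I.minusI {r.2} \ {r.1}}).subR
      {p | p ∈ I.Rq ∧ p.1 ≠ r.1 ∧ p.2 = r.2}) S


namespace Stmt7Aux

variable {α : Type u}

lemma plus_insert (A : Set α) (Q : Set (α × α)) (S : Set α) (r : α × α) (ha : r.1 ∉ S) :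
    (AF.mk A (Q ∪ {r})).plusSet S = (AF.mk A Q).plusSet S := by
  ext x
  simp only [AF.plusSet, Set.mem_setOf_eq, Set.mem_union, Set.mem_singleton_iff]
  constructor
  · rintro ⟨hx, s, hs, h | h⟩
    · exact ⟨hx, s, hs, h⟩
    · subst h; exact absurd hs ha
  · rintro ⟨hx, s, hs, h⟩
    exact ⟨hx, s, hs, Or.inl h⟩

lemma co_insert (A : Set α) (Q : Set (α × α)) (S : Set α) (r : α × α)
    (ha : r.1 ∉ S) (hb : r.2 ∉ S) (h : AF.isCo ⟨A, Q⟩ S) :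
    AF.isCo ⟨A, Q ∪ {r}⟩ S := by
  obtain ⟨⟨hSA, hcf, hadm⟩, hcomp⟩ := h
  have hP := plus_insert A Q S r ha
  refine ⟨⟨hSA, ?_, ?_⟩, ?_⟩
  · show S ∩ _ = ∅
    rw [hP]; exact hcf
  · intro x hx
    refine ⟨(hadm hx).1, fun c hc => ?_⟩
    rcases hc with hc | hc
    · have : c ∈ (AF.mk A Q).plusSet S := (hadm hx).2 c hc
      rw [← hP] at this; exact this
    · subst hc
      exact absurd hx hb
  · intro x hx
    refine hcomp ⟨hx.1, fun c hc => ?_⟩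
    have : c ∈ (AF.mk A (Q ∪ {r})).plusSet S := hx.2 c (Or.inl hc)
    rw [hP] at this; exact this

lemma cert_mk {I' : IAF α} {A : Set α} (hA' : I'.A = A) (hsub : I'.R ⊆ A ×ˢ A) :
    I'.cert = AF.mk A I'.R := by
  unfold IAF.cert
  rw [hA', Set.inter_eq_left.mpr hsub]

lemma completion_mk {I : IAF α} (hAt : I.Aq = ∅) (hR : I.R ⊆ I.A ×ˢ I.A)
    (hQ : I.Rq ⊆ I.A ×ˢ I.A) {R₀ : Set (α × α)} (h₀ : R₀ ⊆ I.Rq) :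
    I.IsCompletion ⟨I.A, I.R ∪ R₀⟩ := by
  have hsub : I.R ∪ R₀ ⊆ I.A ×ˢ I.A := Set.union_subset hR (h₀.trans hQ)
  refine ⟨⟨I.A, ∅, I.R ∪ R₀, ∅⟩, ⟨⟨?_, ?_, ?_, ?_⟩, ?_, ?_, ?_, ?_, ?_, ?_⟩, ?_⟩
  · simp
  · simp
  · simpa using hsub
  · exact Set.empty_subset _
  · exact subset_rfl
  · exact Set.subset_union_left
  · exact Set.inter_subset_left.trans Set.subset_union_left
  · exact Set.union_subset_union_right _ h₀
  · exact Set.empty_subset _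
  · exact Set.empty_subset _
  · exact (cert_mk (I' := ⟨I.A, ∅, I.R ∪ R₀, ∅⟩) rfl hsub).symm

lemma completion_elim {I : IAF α} (hAt : I.Aq = ∅) (hR : I.R ⊆ I.A ×ˢ I.A)
    {F : AF α} (h : I.IsCompletion F) :
    ∃ R₀ ⊆ I.Rq, F = ⟨I.A, I.R ∪ R₀⟩ := by
  obtain ⟨I', ⟨hWF', hA1, hA2, hRsub, hRup, hAqs, hRqs⟩, rfl⟩ := h
  have hA' : I'.A = I.A := by
    apply subset_antisymm _ hA1
    rw [hAt, Set.union_empty] at hA2; exact hA2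
  have hAq' : I'.Aq = ∅ := by
    rw [hAt] at hAqs; exact Set.subset_empty_iff.mp hAqs
  have hRR' : I.R ⊆ I'.R := by
    intro p hp
    apply hRsub
    refine ⟨hp, ?_⟩
    rw [hA', hAq', Set.union_empty]
    exact hR hp
  refine ⟨(I'.R ∩ I.A ×ˢ I.A) \ I.R, fun p hp => ?_, ?_⟩
  · rcases hRup hp.1.1 with h' | h'
    · exact absurd h' hp.2
    · exact h'
  · unfold IAF.cert
    rw [hA', Set.union_diff_cancel (Set.subset_inter hRR' hR)]

end Stmt7Aux

/-- `(co,true)`-relevance of an uncertain attack with both endpoints outside `S`. -/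
theorem stmt7 {α : Type u} (I : IAF α) (S : Set α) (r : α × α)
    (hWF : I.WF) (hAt : I.Aq = ∅) (hS : S ⊆ I.A)
    (hns : ¬ I.stableSem S Sem.co)
    (hr : r ∈ I.Rq) (ha : r.1 ∉ S) (hb : r.2 ∉ S) :
    (Elem.att r ∈ REplus I S (Sem.co, true) ↔ (r.2, r.2) ∉ I.R ∧ OutRel I S r) ∧
    Elem.att r ∉ REminus I S (Sem.co, true) := by
  obtain ⟨a, b⟩ := r
  open Stmt7Aux in
  clear hns
  obtain ⟨hAAq, hRRq, hRsq, hQsq⟩ := hWF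
  have hR2 : I.R ⊆ I.A ×ˢ I.A := by rw [hAt, Set.union_empty] at hRsq; exact hRsq
  have hQ2 : I.Rq ⊆ I.A ×ˢ I.A := by rw [hAt, Set.union_empty] at hQsq; exact hQsq
  have haA : a ∈ I.A := (hQ2 hr).1
  have hbA : b ∈ I.A := (hQ2 hr).2
  have hrR : ((a, b) : α × α) ∉ I.R := fun h => (Set.disjoint_left.mp hRRq h) hr
  set D : Set (α × α) := {p | p ∈ I.Rq ∧ p.1 ∈ S ∧ p.2 ∈ I.minusI {b} \ {a}} with hDdef
  set X : Set (α × α) := {p | p ∈ I.Rq ∧ p.1 ≠ a ∧ p.2 = b} with hXdef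
  have hDQ : D ⊆ I.Rq := fun p hp => hp.1
  have hXQ : X ⊆ I.Rq := fun p hp => hp.1
  have hrX : ((a, b) : α × α) ∉ X := fun h => h.2.1 rfl
  constructor
  · constructor
    · -- forward direction of (i)
      rintro ⟨-, I', ⟨⟨-, hdisj', hR'sq, -⟩, hA1, hA2, hRsub, hRup, hAqs, hRqs⟩,
        honly, hAdd, hSub⟩
      have hAq' : I'.Aq = ∅ := honly.1
      have hA' : I'.A = I.A := by
        apply subset_antisymm _ hA1
        rw [hAt, Set.union_empty] at hA2; exact hA2
      have hR'A2 : I'.R ⊆ I.A ×ˢ I.A := by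
        rw [hA', hAq', Set.union_empty] at hR'sq; exact hR'sq
      have hRin : I.R ⊆ I'.R := by
        intro p hp
        apply hRsub
        refine ⟨hp, ?_⟩
        rw [hA', hAq', Set.union_empty]
        exact hR2 hp
      set Q' : Set (α × α) := I'.R with hQ'def
      have hcertA : (I'.addR {((a,b) : α × α)}).cert = AF.mk I.A (Q' ∪ {((a,b) : α × α)}) :=
        cert_mk hA' (Set.union_subset hR'A2 (Set.singleton_subset_iff.mpr (hQ2 hr)))
      have hcertS : (I'.subR {((a,b) : α × α)}).cert = AF.mk I.A Q' :=
        cert_mk hA' hR'A2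
      replace hAdd : AF.isCo (AF.mk I.A (Q' ∪ {((a,b) : α × α)})) S := by
        have h : AF.isCo ((I'.addR {((a,b) : α × α)}).cert) S := hAdd
        rwa [hcertA] at h
      replace hSub : ¬ AF.isCo (AF.mk I.A Q') S := by
        have h : ¬ AF.isCo ((I'.subR {((a,b) : α × α)}).cert) S := hSub
        rwa [hcertS] at h
      obtain ⟨⟨hSA', hcf', hadm'⟩, hcomp'⟩ := hAdd
      have hP := plus_insert I.A Q' S (a, b) ha
      have hcf : S ∩ (AF.mk I.A Q').plusSet S = ∅ := by rw [← hP]; exact hcf'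
      have hadm : S ⊆ AF.Γ (AF.mk I.A Q') S := by
        intro x hx
        refine ⟨(hadm' hx).1, fun c hc => ?_⟩
        have : c ∈ (AF.mk I.A (Q' ∪ {((a,b) : α × α)})).plusSet S := (hadm' hx).2 c (Or.inl hc)
        rw [hP] at this; exact this
      have hnc : ¬ (AF.Γ (AF.mk I.A Q') S ⊆ S) := fun hcs => hSub ⟨⟨hSA', hcf, hadm⟩, hcs⟩
      obtain ⟨c, hcΓ, hcS⟩ := Set.not_subset.mp hnc
      have hcnot : ¬ AF.defends (AF.mk I.A (Q' ∪ {((a,b) : α × α)})) S c :=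
        fun hd => hcS (hcomp' ⟨hcΓ.1, hd⟩)
      simp only [AF.defends] at hcnot
      push_neg at hcnot
      obtain ⟨d, hdc, hdP⟩ := hcnot
      rcases hdc with hdc | hdc
      · exfalso
        have : d ∈ (AF.mk I.A Q').plusSet S := hcΓ.2 d hdc
        rw [← hP] at this
        exact hdP this
      have hda : a = d := (congrArg Prod.fst hdc).symm
      have hcb : b = c := (congrArg Prod.snd hdc).symm
      subst hda; subst hcb
      rw [hP] at hdP
      -- now: hcΓ : b ∈ Γ(Q'), hdP : a ∉ plus(Q')
      refine ⟨?_, ?_, ?_⟩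
      · -- (b,b) ∉ I.R
        intro hbb
        obtain ⟨-, s, hsS, hsb⟩ := hcΓ.2 b (hRin hbb)
        exact Set.eq_empty_iff_forall_notMem.mp hcf s ⟨hsS, hcΓ.2 s hsb⟩
      · -- first OutRel condition
        apply Set.eq_empty_iff_forall_notMem.mpr
        rintro x ⟨⟨hm, hxa⟩, hsim⟩
        obtain ⟨-, e, rfl, hxe⟩ := hm
        obtain ⟨-, s, hsS, hsx⟩ := hcΓ.2 x (hRin hxe)
        exact hsim.2 s hsS (hRup hsx)
      · -- PosVer condition
        show PosVer Sem.co ((I.addR D).subR X) S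
        set T : Set (α × α) := ((Q' ∪ {((a,b) : α × α)}) \ X) ∪ D with hTdef
        have hDA : D ⊆ I.A ×ˢ I.A := hDQ.trans hQ2
        have hTA : T ⊆ I.A ×ˢ I.A := by
          apply Set.union_subset _ hDA
          exact Set.diff_subset.trans
            (Set.union_subset (hR'A2) (Set.singleton_subset_iff.mpr (hQ2 hr)))
        have hsubT : I.R ∪ D ⊆ T := by
          apply Set.union_subset _ Set.subset_union_right
          intro p hp
          exact Or.inl ⟨Or.inl (hRin hp), fun hpx => (Set.disjoint_left.mp hRRq hp) (hXQ hpx)⟩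
        have hR₀q : T \ (I.R ∪ D) ⊆ ((I.addR D).subR X).Rq := by
          intro p hp
          have hpD : p ∉ D := fun h => hp.2 (Or.inr h)
          have hpR : p ∉ I.R := fun h => hp.2 (Or.inl h)
          rcases hp.1 with ⟨hpQ, hpX⟩ | hpD'
          · refine ⟨⟨?_, hpD⟩, hpX⟩
            rcases hpQ with hpQ | hpQ
            · rcases hRup hpQ with h | h
              · exact absurd h hpR
              · exact h
            · rw [Set.mem_singleton_iff] at hpQ; subst hpQ; exact hr
          · exact absurd hpD' hpD
        have hplusT : (AF.mk I.A T).plusSet S = (AF.mk I.A Q').plusSet S := by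
          ext x
          constructor
          · rintro ⟨hxA, s, hsS, hsx⟩
            rcases hsx with ⟨hsx, -⟩ | hsx
            · rcases hsx with hsx | hsx
              · exact ⟨hxA, s, hsS, hsx⟩
              · rw [Set.mem_singleton_iff] at hsx
                have hsa : a = s := (congrArg Prod.fst hsx).symm
                subst hsa; exact absurd hsS ha
            · obtain ⟨-, -, ⟨-, e, rfl, hxe⟩, -⟩ := hsx
              exact hcΓ.2 x (hRin hxe)
          · rintro ⟨hxA, s, hsS, hsx⟩
            by_cases hXm : ((s, x) : α × α) ∈ X
            · exfalso
              have hxb : b = x := (hXm.2.2).symm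
              subst hxb
              exact Set.eq_empty_iff_forall_notMem.mp hcf s ⟨hsS, hcΓ.2 s hsx⟩
            · exact ⟨hxA, s, hsS, Or.inl ⟨Or.inl hsx, hXm⟩⟩
        refine ⟨AF.mk I.A T, ?_, ?_⟩
        · -- completion of I₁
          have hcm := completion_mk (I := (I.addR D).subR X) hAt
            (Set.union_subset hR2 hDA)
            ((Set.diff_subset.trans Set.diff_subset).trans hQ2) hR₀q
          simp only [IAF.addR, IAF.subR] at hcm ⊢
          rwa [Set.union_diff_cancel hsubT] at hcm
        · -- S is complete in F₁
          show AF.isCo (AF.mk I.A T) S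
          refine ⟨⟨hS, ?_, ?_⟩, ?_⟩
          · show S ∩ _ = ∅
            rw [hplusT]; exact hcf
          · intro x hx
            refine ⟨hS hx, fun c hc => ?_⟩
            rw [show (AF.mk I.A T).plusSet S = _ from hplusT]
            rcases hc with ⟨hc, -⟩ | hc
            · rcases hc with hc | hc
              · have : c ∈ (AF.mk I.A (Q' ∪ {((a,b) : α × α)})).plusSet S :=
                  (hadm' hx).2 c (Or.inl hc)
                rw [hP] at this; exact this
              · rw [Set.mem_singleton_iff] at hc
                have hxb : b = x := (congrArg Prod.snd hc).symm
                subst hxb; exact absurd hx hb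
            · exfalso
              obtain ⟨-, -, ⟨-, e, rfl, hxe⟩, -⟩ := hc
              exact Set.eq_empty_iff_forall_notMem.mp hcf x ⟨hx, hcΓ.2 x (hRin hxe)⟩
          · rintro c ⟨hcA, hdef⟩
            by_contra hcS2
            by_cases hcb : c = b
            · rw [hcb] at hdef
              have har : ((a, b) : α × α) ∈ T := Or.inl ⟨Or.inr rfl, hrX⟩
              have := hdef a har
              rw [show (AF.mk I.A T).plusSet S = _ from hplusT] at this
              exact hdP this
            · have hnΓ : ¬ AF.defends (AF.mk I.A (Q' ∪ {((a,b) : α × α)})) S c :=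
                fun h => hcS2 (hcomp' ⟨hcA, h⟩)
              simp only [AF.defends] at hnΓ
              push_neg at hnΓ
              obtain ⟨e, hec, heP⟩ := hnΓ
              have hecX : ((e, c) : α × α) ∉ X := fun h => hcb h.2.2
              have : e ∈ (AF.mk I.A T).plusSet S := hdef e (Or.inl ⟨hec, hecX⟩)
              rw [show (AF.mk I.A T).plusSet S = _ from hplusT, ← hP] at this
              exact heP this
    · -- backward direction of (i)
      rintro ⟨hbb, hOut1, hOut2⟩
      have hOut2' : PosVer Sem.co ((I.addR D).subR X) S := hOut2
      obtain ⟨F₁, hFc, hFco⟩ := hOut2'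
      have hDA : D ⊆ I.A ×ˢ I.A := hDQ.trans hQ2
      obtain ⟨R₀, hR₀, hF⟩ := completion_elim (I := (I.addR D).subR X) hAt
        (Set.union_subset hR2 hDA) hFc
      have hR₀' : R₀ ⊆ (I.Rq \ D) \ X := hR₀
      subst hF
      have hco1 : AF.isCo (AF.mk I.A ((I.R ∪ D) ∪ R₀)) S := hFco
      set T : Set (α × α) := (I.R ∪ D) ∪ R₀ with hTdef
      have hTA : T ⊆ I.A ×ˢ I.A :=
        Set.union_subset (Set.union_subset hR2 hDA) ((hR₀'.trans Set.diff_subset).trans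
          (Set.diff_subset.trans hQ2))
      have hTRq : T ⊆ I.R ∪ I.Rq :=
        Set.union_subset (Set.union_subset Set.subset_union_left
          (fun p hp => Or.inr (hDQ hp)))
          (fun p hp => Or.inr (Set.diff_subset (Set.diff_subset (hR₀' hp))))
      -- b is not defended in F₁, so the attacker must be a via the uncertain attack r
      have hnd : ¬ AF.defends (AF.mk I.A T) S b := fun h => hb (hco1.2 ⟨hbA, h⟩)
      simp only [AF.defends] at hnd
      push_neg at hnd
      obtain ⟨d, hdb, hdP⟩ := hnd
      have hda : d = a := by
        rcases hdb with (hdbR | hdbD) | hdbR₀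
        · exfalso
          have hdA : d ∈ I.A := (hR2 hdbR).1
          have hdm : d ∈ I.minusI {b} \ {a} := by
            refine ⟨⟨?_, b, rfl, hdbR⟩, ?_⟩
            · rw [hAt, Set.union_empty]; exact hdA
            · intro h
              rw [Set.mem_singleton_iff] at h
              subst h; exact hrR hdbR
          have hnsim : d ∉ I.simI S :=
            fun hsim => Set.eq_empty_iff_forall_notMem.mp hOut1 d ⟨hdm, hsim⟩
          simp only [IAF.simI, Set.mem_setOf_eq] at hnsim
          push_neg at hnsim
          obtain ⟨s, hsS, hsd⟩ := hnsim (by rw [hAt, Set.union_empty]; exact hdA)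
          rcases hsd with hsd | hsd
          · exact hdP ⟨hdA, s, hsS, Or.inl (Or.inl hsd)⟩
          · exact hdP ⟨hdA, s, hsS, Or.inl (Or.inr ⟨hsd, hsS, hdm⟩)⟩
        · exfalso
          obtain ⟨-, -, ⟨-, e, rfl, hbe⟩, -⟩ := hdbD
          exact hbb hbe
        · have h1 := hR₀' hdbR₀
          by_contra hne
          exact h1.2 ⟨(h1.1).1, hne, rfl⟩
      rw [hda] at hdb
      -- build the witness for RE⁺
      refine ⟨hr, ⟨I.A, ∅, T \ {((a,b) : α × α)}, {((a,b) : α × α)}⟩,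
        ⟨⟨?_, ?_, ?_, ?_⟩, ?_, ?_, ?_, ?_, ?_, ?_⟩, ⟨rfl, rfl⟩, ?_, ?_⟩
      · simp
      · simp
      · simp only [Set.union_empty]
        exact Set.diff_subset.trans hTA
      · simp only [Set.union_empty]
        exact Set.singleton_subset_iff.mpr (hQ2 hr)
      · exact subset_rfl
      · exact Set.subset_union_left
      · intro p hp
        refine ⟨Or.inl (Or.inl hp.1), fun h => ?_⟩
        rw [Set.mem_singleton_iff] at h
        subst h
        exact hrR hp.1
      · exact Set.diff_subset.trans hTRq
      · exact Set.empty_subset _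
      · exact Set.singleton_subset_iff.mpr hr
      · -- S complete after adding r
        show AF.isCo ((IAF.addR ⟨I.A, ∅, T \ {((a,b) : α × α)}, {((a,b) : α × α)}⟩
          {((a,b) : α × α)}).cert) S
        have hc2 : (IAF.addR ⟨I.A, ∅, T \ {((a,b) : α × α)}, {((a,b) : α × α)}⟩
            {((a,b) : α × α)}).cert = AF.mk I.A T := by
          show AF.mk I.A ((T \ {((a,b) : α × α)} ∪ {((a,b) : α × α)}) ∩ I.A ×ˢ I.A) = _
          rw [Set.diff_union_self,
            Set.union_eq_self_of_subset_right (Set.singleton_subset_iff.mpr hdb),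
            Set.inter_eq_left.mpr hTA]
        rw [hc2]
        exact hco1
      · -- S not complete without r
        show ¬ AF.isCo ((IAF.subR ⟨I.A, ∅, T \ {((a,b) : α × α)}, {((a,b) : α × α)}⟩
          {((a,b) : α × α)}).cert) S
        have hc3 : (IAF.subR ⟨I.A, ∅, T \ {((a,b) : α × α)}, {((a,b) : α × α)}⟩
            {((a,b) : α × α)}).cert = AF.mk I.A (T \ {((a,b) : α × α)}) := by
          show AF.mk I.A ((T \ {((a,b) : α × α)}) ∩ I.A ×ˢ I.A) = _
          rw [Set.inter_eq_left.mpr (Set.diff_subset.trans hTA)]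
        rw [hc3]
        intro hco2
        apply hb
        apply hco2.2
        refine ⟨hbA, fun c hc => ?_⟩
        obtain ⟨hcT, hcr⟩ := hc
        have hca : c ≠ a := fun h => hcr (by rw [h]; rfl)
        rcases hcT with (hcR | hcD) | hcR₀
        · -- c is a certain attacker of b, c ≠ a
          have hcA : c ∈ I.A := (hR2 hcR).1
          have hcm : c ∈ I.minusI {b} \ {a} := by
            refine ⟨⟨?_, b, rfl, hcR⟩, ?_⟩
            · rw [hAt, Set.union_empty]; exact hcA
            · intro h
              rw [Set.mem_singleton_iff] at h
              exact hca h
          have hnsim : c ∉ I.simI S :=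
            fun hsim => Set.eq_empty_iff_forall_notMem.mp hOut1 c ⟨hcm, hsim⟩
          simp only [IAF.simI, Set.mem_setOf_eq] at hnsim
          push_neg at hnsim
          obtain ⟨s, hsS, hsc⟩ := hnsim (by rw [hAt, Set.union_empty]; exact hcA)
          have hsa : s ≠ a := fun h => ha (h ▸ hsS)
          rcases hsc with hsc | hsc
          · refine ⟨hcA, s, hsS, ⟨Or.inl (Or.inl hsc), fun h => ?_⟩⟩
            rw [Set.mem_singleton_iff] at h
            exact hsa (congrArg Prod.fst h)
          · refine ⟨hcA, s, hsS, ⟨Or.inl (Or.inr ⟨hsc, hsS, hcm⟩), fun h => ?_⟩⟩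
            rw [Set.mem_singleton_iff] at h
            exact hsa (congrArg Prod.fst h)
        · exfalso
          obtain ⟨-, -, ⟨-, e, rfl, hbe⟩, -⟩ := hcD
          exact hbb hbe
        · exfalso
          have h1 := hR₀' hcR₀
          exact h1.2 ⟨(h1.1).1, hca, rfl⟩
  · -- part (ii)
    rintro ⟨-, I', ⟨⟨-, hdisj', hR'sq, -⟩, hA1, hA2, hRsub, hRup, hAqs, hRqs⟩,
      honly, hSubCo, hAddn⟩
    have hAq' : I'.Aq = ∅ := honly.1
    have hA' : I'.A = I.A := by
      apply subset_antisymm _ hA1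
      rw [hAt, Set.union_empty] at hA2; exact hA2
    have hR'A2 : I'.R ⊆ I.A ×ˢ I.A := by
      rw [hA', hAq', Set.union_empty] at hR'sq; exact hR'sq
    have hc : (I'.addR {((a,b) : α × α)}).cert = AF.mk I.A (I'.R ∪ {((a,b) : α × α)}) :=
      cert_mk hA' (Set.union_subset hR'A2 (Set.singleton_subset_iff.mpr (hQ2 hr)))
    have hcs : (I'.subR {((a,b) : α × α)}).cert = AF.mk I.A I'.R :=
      cert_mk hA' hR'A2
    apply hAddn
    show AF.isCo ((I'.addR {((a,b) : α × α)}).cert) S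
    rw [hc]
    have hSubCo' : AF.isCo ((I'.subR {((a,b) : α × α)}).cert) S := hSubCo
    rw [hcs] at hSubCo'
    exact co_insert I.A I'.R S (a, b) ha hb hSubCo'
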